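/- Let n ≥ 1, p, q > 0, and let K : (0,∞) → (0,∞) be continuous such that there exists R₀ > 1 with inf_{r∈(0,R)} K(r) = K(R) for all R > R₀. Let T > 1 satisfy 12 T^{1/2} > R₀, set B_T = {(x,y,τ) : |x|² ≤ T, |y|² ≤ T, |τ| ≤ T}, and let ψ : ℍⁿ → [0,1] be measurable with ψ = 0 outside B_T. Then for every measurable u : ℍⁿ → ℝ, ∫_{B_T} (K ∗_ℍ |u|^p)(η) |u(η)|^q ψ(η) dη ≥ K(12 T^{1/2}) (∫_{ℍⁿ} |u(η)|^{(p+q)/2} ψ(η) dη)², with all integrals interpreted in [0,∞]. -/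

import Mathlib

open MeasureTheory Filter Real Set
open scoped ENNReal

noncomputable section

/-- The Heisenberg group `ℍⁿ`, modelled as `ℝⁿ × ℝⁿ × ℝ` with Lebesgue measure. -/
abbrev Heis (n : ℕ) : Type := EuclideanSpace ℝ (Fin n) × EuclideanSpace ℝ (Fin n) × ℝ

/-- The Heisenberg group law `(x,y,τ)∘(x',y',τ') = (x+x', y+y', τ+τ'+2(x·y'−x'·y))`. -/
def hMul {n : ℕ} (η ξ : Heis n) : Heis n :=
  (η.1 + ξ.1, η.2.1 + ξ.2.1,
    η.2.2 + ξ.2.2 + 2 * ∑ i, (η.1 i * ξ.2.1 i - ξ.1 i * η.2.1 i))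

/-- The Heisenberg group inverse `η⁻¹ = −η`. -/
def hInv {n : ℕ} (η : Heis n) : Heis n := (-η.1, -η.2.1, -η.2.2)

/-- The Korányi norm `|(x,y,τ)|_ℍ = ((|x|²+|y|²)² + τ²)^(1/4)`. -/
def kNorm {n : ℕ} (η : Heis n) : ℝ :=
  ((‖η.1‖ ^ 2 + ‖η.2.1‖ ^ 2) ^ 2 + η.2.2 ^ 2) ^ ((1 : ℝ) / 4)

/-- The Korányi distance `d_ℍ(η,ξ) = |ξ⁻¹ ∘ η|_ℍ`. -/
def kDist {n : ℕ} (η ξ : Heis n) : ℝ := kNorm (hMul (hInv ξ) η)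

/-- The left-invariant vector field `X_i = ∂_{x_i} − 2 y_i ∂_τ` (as a vector at `η`). -/
def XV {n : ℕ} (i : Fin n) (η : Heis n) : Heis n :=
  (EuclideanSpace.single i (1 : ℝ), 0, -(2 * η.2.1 i))

/-- The left-invariant vector field `Y_i = ∂_{y_i} + 2 x_i ∂_τ` (as a vector at `η`). -/
def YV {n : ℕ} (i : Fin n) (η : Heis n) : Heis n :=
  (0, EuclideanSpace.single i (1 : ℝ), 2 * η.1 i)

/-- The derivative of `f` along the vector field `V`. -/
def vderiv {n : ℕ} (V : Heis n → Heis n) (f : Heis n → ℝ) (η : Heis n) : ℝ :=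
  fderiv ℝ f η (V η)

/-- The sub-Laplacian (Kohn Laplacian) `Δ_ℍ = Σ (X_i² + Y_i²)`. -/
def heisLap {n : ℕ} (f : Heis n → ℝ) (η : Heis n) : ℝ :=
  ∑ i : Fin n, (vderiv (XV i) (vderiv (XV i) f) η + vderiv (YV i) (vderiv (YV i) f) η)

/-- Partial derivative `∂_{x_i}`. -/
def pdx {n : ℕ} (i : Fin n) (f : Heis n → ℝ) (η : Heis n) : ℝ :=
  fderiv ℝ f η (EuclideanSpace.single i (1 : ℝ), 0, 0)

/-- Partial derivative `∂_{y_i}`. -/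
def pdy {n : ℕ} (i : Fin n) (f : Heis n → ℝ) (η : Heis n) : ℝ :=
  fderiv ℝ f η (0, EuclideanSpace.single i (1 : ℝ), 0)

/-- Partial derivative `∂_τ`. -/
def pdt {n : ℕ} (f : Heis n → ℝ) (η : Heis n) : ℝ :=
  fderiv ℝ f η (0, 0, 1)

/-- The Heisenberg convolution `(K ∗_ℍ |u|^p)(η) = ∫ K(d_ℍ(η,ξ)) |u(ξ)|^p dξ`, in `[0,∞]`. -/
def heisConv {n : ℕ} (K : ℝ → ℝ) (v : Heis n → ℝ) (p : ℝ) (η : Heis n) : ℝ≥0∞ :=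
  ∫⁻ ξ, ENNReal.ofReal (K (kDist η ξ) * |v ξ| ^ p)

/-- The nonlinearity `(K ∗_ℍ |u|^p)(η) |u(t,η)|^q`, valued in `[0,∞]`. -/
def nonlin {n : ℕ} (K : ℝ → ℝ) (p q : ℝ) (u : ℝ → Heis n → ℝ) (t : ℝ) (η : Heis n) : ℝ≥0∞ :=
  heisConv K (u t) p η * ENNReal.ofReal (|u t η| ^ q)

/-- The box `B_T = {(x,y,τ) : |x|² ≤ T, |y|² ≤ T, |τ| ≤ T}`. -/
def BT (n : ℕ) (T : ℝ) : Set (Heis n) :=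
  {η | ‖η.1‖ ^ 2 ≤ T ∧ ‖η.2.1‖ ^ 2 ≤ T ∧ |η.2.2| ≤ T}

/-- The parabolic dilation `δ_λ(x,y,τ) = (λx, λy, λ²τ)`. -/
def dilation (n : ℕ) (lam : ℝ) (η : Heis n) : Heis n :=
  (lam • η.1, lam • η.2.1, lam ^ 2 * η.2.2)

/-- A global weak solution of `u_t − Δ_ℍ u ≥ (K ∗_ℍ |u|^p)|u|^q`, `u(·,0) = u₀`:
`u ∈ L^p_loc((0,∞)×ℍⁿ)`, the nonlinearity is in `L¹_loc((0,∞)×ℍⁿ)`, and the weak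
integral inequality holds against every nonnegative compactly supported `C²` test
function for every time `τ ≥ 0`. -/
structure IsGlobalWeakSolution {n : ℕ} (K : ℝ → ℝ) (p q : ℝ)
    (u₀ : Heis n → ℝ) (u : ℝ → Heis n → ℝ) : Prop where
  measurable : Measurable (Function.uncurry u)
  lp_loc : ∀ S : Set (ℝ × Heis n), IsCompact S → S ⊆ Ioi (0 : ℝ) ×ˢ (univ : Set (Heis n)) →
    ∫⁻ z in S, ENNReal.ofReal (|u z.1 z.2| ^ p) < ∞
  nonlin_loc : ∀ S : Set (ℝ × Heis n), IsCompact S → S ⊆ Ioi (0 : ℝ) ×ˢ (univ : Set (Heis n)) →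
    ∫⁻ z in S, nonlin K p q u z.1 z.2 < ∞
  weak : ∀ ψ : ℝ × Heis n → ℝ, ContDiff ℝ 2 ψ → HasCompactSupport ψ →
    (∀ z, 0 ≤ ψ z) → ∀ τ : ℝ, 0 ≤ τ →
      (∫ t in Ioc (0 : ℝ) τ, ∫ η, (nonlin K p q u t η).toReal * ψ (t, η))
        + (∫ t in Ioc (0 : ℝ) τ, ∫ η, u t η * heisLap (fun ξ => ψ (t, ξ)) η)
        + (∫ t in Ioc (0 : ℝ) τ, ∫ η, u t η * deriv (fun s => ψ (s, η)) t)
      ≤ (∫ η, u τ η * ψ (τ, η)) - ∫ η, u₀ η * ψ (0, η)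

/-! On `B_T` the Korányi distance between two points stays below `12√T` (in fact below
`√10·√T`), so off the diagonal the kernel is at least `K(12√T)` and the convolution integral is at least
`K(12√T) (∫_{B_T} |u|^p) (∫ |u|^q ψ)`. Cauchy–Schwarz applied to the splitting
`|u|^{(p+q)/2} ψ = (|u|^{p/2} √ψ) (|u|^{q/2} √ψ)` bounds `(∫ |u|^{(p+q)/2} ψ)²` by
`(∫ |u|^p ψ) (∫ |u|^q ψ)`, and `∫ |u|^p ψ ≤ ∫_{B_T} |u|^p` since `0 ≤ ψ ≤ 1` vanishes off `B_T`. -/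

lemma measurableSet_BT (n : ℕ) (T : ℝ) : MeasurableSet (BT n T) := by
  show MeasurableSet ({η : Heis n | ‖η.1‖ ^ 2 ≤ T} ∩
    ({η | ‖η.2.1‖ ^ 2 ≤ T} ∩ {η | |η.2.2| ≤ T}))
  refine (measurableSet_le ?_ ?_).inter
    ((measurableSet_le ?_ ?_).inter (measurableSet_le ?_ ?_)) <;> fun_prop

instance Heis.nullSingletonClass_volume (n : ℕ) : NullSingletonClass (volume : Measure (Heis n)) := by
  rw [Measure.volume_eq_prod, Measure.volume_eq_prod]
  infer_instance

lemma kNorm_pos {n : ℕ} {η : Heis n} (hη : η ≠ 0) : 0 < kNorm η := by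
  refine Real.rpow_pos_of_pos (lt_of_le_of_ne (by positivity) (Ne.symm fun h => hη ?_)) _
  have hxy : ‖η.1‖ ^ 2 + ‖η.2.1‖ ^ 2 = 0 := by nlinarith [sq_nonneg η.2.2]
  have hτ : η.2.2 = 0 := by nlinarith [sq_nonneg (‖η.1‖ ^ 2 + ‖η.2.1‖ ^ 2)]
  have hx : η.1 = 0 := norm_eq_zero.1 (by nlinarith [sq_nonneg ‖η.1‖, sq_nonneg ‖η.2.1‖])
  have hy : η.2.1 = 0 := norm_eq_zero.1 (by nlinarith [sq_nonneg ‖η.1‖, sq_nonneg ‖η.2.1‖])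
  exact Prod.ext hx (Prod.ext hy hτ)

lemma kNorm_lt_of_lt_pow_four {n : ℕ} {η : Heis n} {r : ℝ} (hr : 0 < r)
    (h : (‖η.1‖ ^ 2 + ‖η.2.1‖ ^ 2) ^ 2 + η.2.2 ^ 2 < r ^ 4) : kNorm η < r := by
  unfold kNorm
  calc _ < (r ^ 4) ^ ((1 : ℝ) / 4) := Real.rpow_lt_rpow (by positivity) h (by norm_num)
    _ = r := by rw [one_div]; exact_mod_cast Real.pow_rpow_inv_natCast hr.le (by norm_num)

lemma hMul_hInv_eq {n : ℕ} (η ξ : Heis n) :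
    hMul (hInv ξ) η = (η.1 - ξ.1, η.2.1 - ξ.2.1,
      η.2.2 - ξ.2.2 + 2 * (inner ℝ η.1 ξ.2.1 - inner ℝ ξ.1 η.2.1)) := by
  refine Prod.ext (neg_add_eq_sub _ _) (Prod.ext (neg_add_eq_sub _ _) ?_)
  simp only [hMul, hInv, PiLp.inner_apply, RCLike.inner_apply, conj_trivial,
    ← Finset.sum_sub_distrib, PiLp.neg_apply]
  rw [neg_add_eq_sub]
  congr 2
  exact Finset.sum_congr rfl fun i _ => by ring

lemma kDist_pos {n : ℕ} {η ξ : Heis n} (hne : ξ ≠ η) : 0 < kDist η ξ := by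
  refine kNorm_pos fun h => hne ?_
  rw [hMul_hInv_eq] at h
  simp only [Prod.mk_eq_zero, sub_eq_zero] at h
  obtain ⟨hx, hy, hτ⟩ := h
  rw [hx, hy, real_inner_comm, sub_self, mul_zero, add_zero, sub_eq_zero] at hτ
  exact Prod.ext hx.symm (Prod.ext hy.symm hτ.symm)

lemma norm_sub_sq_le_of_sq_le {E : Type*} [SeminormedAddCommGroup E] {x y : E} {T : ℝ}
    (hx : ‖x‖ ^ 2 ≤ T) (hy : ‖y‖ ^ 2 ≤ T) : ‖x - y‖ ^ 2 ≤ 4 * T := by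
  nlinarith [norm_sub_le x y, norm_nonneg (x - y), sq_nonneg (‖x‖ - ‖y‖)]

lemma abs_real_inner_le_of_sq_le {E : Type*} [SeminormedAddCommGroup E] [InnerProductSpace ℝ E]
    {x y : E} {T : ℝ} (hx : ‖x‖ ^ 2 ≤ T) (hy : ‖y‖ ^ 2 ≤ T) : |inner ℝ x y| ≤ T :=
  (abs_real_inner_le_norm x y).trans (by nlinarith [sq_nonneg (‖x‖ - ‖y‖)])

lemma kDist_lt_of_mem_BT {n : ℕ} {T : ℝ} (hT : 0 < T) {η ξ : Heis n}
    (hη : η ∈ BT n T) (hξ : ξ ∈ BT n T) : kDist η ξ < 12 * √T := by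
  obtain ⟨hη₁, hη₂, hη₃⟩ := hη
  obtain ⟨hξ₁, hξ₂, hξ₃⟩ := hξ
  refine kNorm_lt_of_lt_pow_four (by positivity) ?_
  rw [hMul_hInv_eq]
  set τ := η.2.2 - ξ.2.2 + 2 * (inner ℝ η.1 ξ.2.1 - inner ℝ ξ.1 η.2.1)
  have hxy : ‖η.1 - ξ.1‖ ^ 2 + ‖η.2.1 - ξ.2.1‖ ^ 2 ≤ 8 * T := by
    linarith [norm_sub_sq_le_of_sq_le hη₁ hξ₁, norm_sub_sq_le_of_sq_le hη₂ hξ₂]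
  have hτ : |τ| ≤ 6 * T := by
    have h₁ := abs_le.1 (abs_real_inner_le_of_sq_le hη₁ hξ₂)
    have h₂ := abs_le.1 (abs_real_inner_le_of_sq_le hξ₁ hη₂)
    rw [abs_le] at hη₃ hξ₃ ⊢
    constructor <;> linarith
  have h₁₂ : (12 * √T) ^ 4 = 20736 * T ^ 2 := by
    rw [mul_pow, show √T ^ 4 = (√T ^ 2) ^ 2 by ring, Real.sq_sqrt hT.le]
    norm_num
  rw [h₁₂]
  nlinarith [pow_le_pow_left₀ (by positivity) hxy 2, sq_le_sq' (abs_le.1 hτ).1 (abs_le.1 hτ).2]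

lemma Real.sInf_le_of_sInf_ne_zero {S : Set ℝ} {x : ℝ} (h : sInf S ≠ 0) (hx : x ∈ S) :
    sInf S ≤ x :=
  csInf_le (by_contra fun hb => h (Real.sInf_of_not_bddBelow hb)) hx

lemma ofReal_mul_setLIntegral_le_heisConv {n : ℕ} {K : ℝ → ℝ} {v : Heis n → ℝ} {p m : ℝ}
    {S : Set (Heis n)} (hS : MeasurableSet S) {η : Heis n}
    (hK : ∀ ξ ∈ S, ξ ≠ η → m ≤ K (kDist η ξ)) :
    ENNReal.ofReal m * ∫⁻ ξ in S, ENNReal.ofReal (|v ξ| ^ p) ≤ heisConv K v p η := by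
  rw [← lintegral_const_mul' _ _ ENNReal.ofReal_ne_top]
  calc ∫⁻ ξ in S, ENNReal.ofReal m * ENNReal.ofReal (|v ξ| ^ p)
      ≤ ∫⁻ ξ in S, ENNReal.ofReal (K (kDist η ξ) * |v ξ| ^ p) := by
        refine lintegral_mono_ae ?_
        filter_upwards [ae_restrict_mem hS,
          ae_restrict_of_ae (measure_eq_zero_iff_ae_notMem.1 (measure_singleton η))]
          with ξ hξS hξη
        rw [← ENNReal.ofReal_mul' (by positivity)]
        exact ENNReal.ofReal_le_ofReal
          (mul_le_mul_of_nonneg_right (hK ξ hξS hξη) (by positivity))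
    _ ≤ heisConv K v p η := setLIntegral_le_lintegral _ _

lemma ENNReal.lintegral_mul_sq_le {α : Type*} [MeasurableSpace α] (μ : Measure α)
    {f g : α → ℝ≥0∞} (hf : AEMeasurable f μ) (hg : AEMeasurable g μ) :
    (∫⁻ a, f a * g a ∂μ) ^ 2 ≤ (∫⁻ a, f a ^ 2 ∂μ) * ∫⁻ a, g a ^ 2 ∂μ := by
  have h := ENNReal.lintegral_mul_le_Lp_mul_Lq μ Real.HolderConjugate.two_two hf hg
  simp only [Pi.mul_apply, ENNReal.rpow_two, one_div] at h
  calc (∫⁻ a, f a * g a ∂μ) ^ 2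
      ≤ ((∫⁻ a, f a ^ 2 ∂μ) ^ (2 : ℝ)⁻¹ * (∫⁻ a, g a ^ 2 ∂μ) ^ (2 : ℝ)⁻¹) ^ (2 : ℝ) := by
        rw [ENNReal.rpow_two]
        gcongr
    _ = (∫⁻ a, f a ^ 2 ∂μ) * ∫⁻ a, g a ^ 2 ∂μ := by
        rw [ENNReal.mul_rpow_of_nonneg _ _ zero_le_two, ENNReal.rpow_inv_rpow two_ne_zero,
          ENNReal.rpow_inv_rpow two_ne_zero]

lemma rpow_half_mul_sqrt_sq {a b : ℝ} (ha : 0 ≤ a) (hb : 0 ≤ b) (p : ℝ) :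
    (a ^ (p / 2) * √b) ^ 2 = a ^ p * b := by
  rw [mul_pow, ← Real.rpow_mul_natCast ha, Real.sq_sqrt hb]
  norm_num

lemma lintegral_rpow_mul_weight_sq_le {α : Type*} [MeasurableSpace α] (μ : Measure α)
    {u w : α → ℝ} (hu : Measurable u) (hw : Measurable w) (hw₀ : ∀ a, 0 ≤ w a)
    {p q : ℝ} (hp : 0 ≤ p) (hq : 0 ≤ q) :
    (∫⁻ a, ENNReal.ofReal (|u a| ^ ((p + q) / 2) * w a) ∂μ) ^ 2 ≤
      (∫⁻ a, ENNReal.ofReal (|u a| ^ p * w a) ∂μ) * ∫⁻ a, ENNReal.ofReal (|u a| ^ q * w a) ∂μ := by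
  set F : ℝ → α → ℝ≥0∞ := fun r a => ENNReal.ofReal (|u a| ^ (r / 2) * √(w a))
  have hF : ∀ r, Measurable (F r) := fun r =>
    ((hu.abs.pow_const _).mul hw.sqrt).ennreal_ofReal
  have hF_sq : ∀ r a, F r a ^ 2 = ENNReal.ofReal (|u a| ^ r * w a) := fun r a => by
    rw [← ENNReal.ofReal_pow (by positivity), rpow_half_mul_sqrt_sq (abs_nonneg _) (hw₀ a)]
  have hFF : ∀ a, ENNReal.ofReal (|u a| ^ ((p + q) / 2) * w a) = F p a * F q a := fun a => by
    rw [← ENNReal.ofReal_mul (by positivity), add_div,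
      Real.rpow_add_of_nonneg (abs_nonneg _) (by positivity) (by positivity)]
    congr 1
    linear_combination (|u a| ^ (p / 2) * |u a| ^ (q / 2)) * (Real.mul_self_sqrt (hw₀ a)).symm
  simp only [hFF, ← hF_sq]
  exact ENNReal.lintegral_mul_sq_le μ (hF p).aemeasurable (hF q).aemeasurable

lemma support_ofReal_mul_subset {α : Type*} {f w : α → ℝ} {S : Set α}
    (hw : ∀ a ∉ S, w a = 0) : Function.support (fun a => ENNReal.ofReal (f a * w a)) ⊆ S :=
  fun a ha => by_contra fun haS => ha (by simp [hw a haS])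

theorem weighted_nonlinearity_lower_bound_general
    (n : ℕ) (p q : ℝ) (hp : 0 < p) (hq : 0 < q)
    (K : ℝ → ℝ) (hKpos : ∀ r > (0 : ℝ), 0 < K r)
    (R₀ : ℝ) (hKinf : ∀ R > R₀, sInf (K '' Ioo 0 R) = K R)
    (T : ℝ) (hT : 1 < T) (hTR : R₀ < 12 * Real.sqrt T)
    (ψ : Heis n → ℝ) (hψmeas : Measurable ψ) (hψ01 : ∀ η, ψ η ∈ Icc (0 : ℝ) 1)
    (hψsupp : ∀ η ∉ BT n T, ψ η = 0)
    (u : Heis n → ℝ) (hu : Measurable u) :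
    ENNReal.ofReal (K (12 * Real.sqrt T)) *
        (∫⁻ η, ENNReal.ofReal (|u η| ^ ((p + q) / 2) * ψ η)) ^ 2
      ≤ ∫⁻ η in BT n T, heisConv K u p η * ENNReal.ofReal (|u η| ^ q * ψ η) := by
  have hT₀ : 0 < T := by linarith
  have hB := measurableSet_BT n T
  set c := 12 * √T
  have hK_le : ∀ η ∈ BT n T, ∀ ξ ∈ BT n T, ξ ≠ η → K c ≤ K (kDist η ξ) := by
    intro η hη ξ hξ hne
    have hinf := hKinf c hTR
    rw [← hinf]
    exact Real.sInf_le_of_sInf_ne_zero (hinf ▸ (hKpos c (by positivity)).ne')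
      ⟨_, ⟨kDist_pos hne, kDist_lt_of_mem_BT hT₀ hη hξ⟩, rfl⟩
  have hp_le : ∫⁻ η, ENNReal.ofReal (|u η| ^ p * ψ η) ≤
      ∫⁻ η in BT n T, ENNReal.ofReal (|u η| ^ p) := by
    rw [← setLIntegral_eq_of_support_subset (support_ofReal_mul_subset hψsupp)]
    exact setLIntegral_mono' hB fun η _ =>
      ENNReal.ofReal_le_ofReal (mul_le_of_le_one_right (by positivity) (hψ01 η).2)
  calc ENNReal.ofReal (K c) * (∫⁻ η, ENNReal.ofReal (|u η| ^ ((p + q) / 2) * ψ η)) ^ 2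
      ≤ ENNReal.ofReal (K c) * ((∫⁻ ξ in BT n T, ENNReal.ofReal (|u ξ| ^ p)) *
          ∫⁻ η in BT n T, ENNReal.ofReal (|u η| ^ q * ψ η)) := by
        rw [setLIntegral_eq_of_support_subset (support_ofReal_mul_subset hψsupp)]
        gcongr
        exact (lintegral_rpow_mul_weight_sq_le volume hu hψmeas (fun η => (hψ01 η).1) hp.le
          hq.le).trans (by gcongr)
    _ = ∫⁻ η in BT n T, ENNReal.ofReal (K c) * (∫⁻ ξ in BT n T, ENNReal.ofReal (|u ξ| ^ p)) *
          ENNReal.ofReal (|u η| ^ q * ψ η) := by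
        rw [lintegral_const_mul _ (by fun_prop), mul_assoc]
    _ ≤ ∫⁻ η in BT n T, heisConv K u p η * ENNReal.ofReal (|u η| ^ q * ψ η) :=
        setLIntegral_mono' hB fun η hη => by
          gcongr
          exact ofReal_mul_setLIntegral_le_heisConv hB (hK_le η hη)

/-- Lower bound for the weighted nonlinear term (inequality (13) in the proof):
`∫_{B_T} (K ∗_ℍ |u|^p)(η) |u(η)|^q ψ(η) dη ≥ K(12√T) (∫ |u|^((p+q)/2) ψ)²`. -/
theorem weighted_nonlinearity_lower_bound
    (n : ℕ) (hn : 1 ≤ n) (p q : ℝ) (hp : 0 < p) (hq : 0 < q)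
    (K : ℝ → ℝ) (hKcont : ContinuousOn K (Ioi 0)) (hKpos : ∀ r > (0 : ℝ), 0 < K r)
    (R₀ : ℝ) (hR₀ : 1 < R₀) (hKinf : ∀ R > R₀, sInf (K '' Ioo 0 R) = K R)
    (T : ℝ) (hT : 1 < T) (hTR : R₀ < 12 * Real.sqrt T)
    (ψ : Heis n → ℝ) (hψmeas : Measurable ψ) (hψ01 : ∀ η, ψ η ∈ Icc (0 : ℝ) 1)
    (hψsupp : ∀ η ∉ BT n T, ψ η = 0)
    (u : Heis n → ℝ) (hu : Measurable u) :
    ENNReal.ofReal (K (12 * Real.sqrt T)) *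
        (∫⁻ η, ENNReal.ofReal (|u η| ^ ((p + q) / 2) * ψ η)) ^ 2
      ≤ ∫⁻ η in BT n T, heisConv K u p η * ENNReal.ofReal (|u η| ^ q * ψ η) :=
  weighted_nonlinearity_lower_bound_general n p q hp hq K hKpos R₀ hKinf T hT hTR ψ hψmeas hψ01
    hψsupp u hu
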